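/- Let Tφ := (T(ιφ_1), …, T(ιφ_N)) ∈ Ṽ^N and M := ⟦φ, Tφ⟧ (entries M_{ij} = ⟨ιφ_i, ι T(ιφ_j)⟩), which is invertible. Then g := φ − (Tφ)·M^{-1} is the unique element of the tangent space T_φ satisfying a(g, η) = a(φ, η) for all η ∈ T_φ; that is, g is the Riemannian gradient at φ (with respect to the metric induced by a) of any energy functional whose directional derivative at φ is v ↦ a(φ, v). -/

import Mathlib

open scoped RealInnerProductSpace

/-- Multiplication of a tuple by a matrix from the right: `(vS)_j = Σ_i S_{ij} v_i`. -/
def smulMat {N : ℕ} {V : Type*} [AddCommGroup V] [Module ℝ V]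
    (v : Fin N → V) (S : Matrix (Fin N) (Fin N) ℝ) : Fin N → V :=
  fun j => ∑ i, S i j • v i

/-- The normalized symmetric matrices `S^{ij}`: `S^{ii} = e_i e_iᵀ` and, for `i ≠ j`,
`S^{ij} = (e_i e_jᵀ + e_j e_iᵀ)/√2`. -/
noncomputable def SijMat {N : ℕ} (i j : Fin N) : Matrix (Fin N) (Fin N) ℝ :=
  if i = j then Matrix.single i i 1
  else (Real.sqrt 2)⁻¹ • (Matrix.single i j 1 + Matrix.single j i 1)

/-- The outer product of tuples in `Ṽ^N`, computed in `H₀` through the embedding `ι`. -/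
noncomputable def outerProdI {N : ℕ} {V H₀ : Type*} [NormedAddCommGroup V]
    [NormedAddCommGroup H₀] [InnerProductSpace ℝ H₀] [NormedSpace ℝ V]
    (ι : V →L[ℝ] H₀) (v w : Fin N → V) : Matrix (Fin N) (Fin N) ℝ :=
  Matrix.of fun i j => ⟪ι (v i), ι (w j)⟫

/-- The inner product `(v,w)_H = tr⟦v,w⟧`, computed in `H₀` through the embedding `ι`. -/
noncomputable def innerHI {N : ℕ} {V H₀ : Type*} [NormedAddCommGroup V]
    [NormedAddCommGroup H₀] [InnerProductSpace ℝ H₀] [NormedSpace ℝ V]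
    (ι : V →L[ℝ] H₀) (v w : Fin N → V) : ℝ :=
  ∑ j, ⟪ι (v j), ι (w j)⟫

/-- The tuple `Tφ = (T(ιφ_1), …, T(ιφ_N))`. -/
noncomputable def Tphi {N : ℕ} {V H₀ : Type*} (ι : V → H₀) (T : H₀ → V)
    (φ : Fin N → V) : Fin N → V :=
  fun i => T (ι (φ i))

/-- The matrix `M = ⟦φ, Tφ⟧` with entries `⟨ιφ_i, ι T(ιφ_j)⟩`. -/
noncomputable def Mmat {N : ℕ} {V H₀ : Type*} [NormedAddCommGroup V]
    [NormedAddCommGroup H₀] [InnerProductSpace ℝ H₀] [NormedSpace ℝ V]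
    (ι : V →L[ℝ] H₀) (T : H₀ → V) (φ : Fin N → V) : Matrix (Fin N) (Fin N) ℝ :=
  Matrix.of fun i j => ⟪ι (φ i), ι (T (ι (φ j)))⟫

/-!
Write `t := Tφ` and `M := ⟦φ, t⟧`. By definition of `T`, `a(t_i, w) = ⟨ιφ_i, ιw⟩`, so `M` is the
`a`-Gram matrix of `t`, and for `x` with `x M = 0` the combination `u = Σ xᵢ tᵢ` has `a(u,u) = 0`;
then `u = 0` and testing against `φ_j` gives `x = 0`. Tangency of `g = φ − tM⁻¹` is the identity
`2I − (MM⁻¹)ᵀ − MM⁻¹ = 0`. For tangent `η`, `a(tM⁻¹, η)` is the Frobenius pairing of the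
symmetric `M⁻¹` with the skew matrix `⟦φ, η⟧`, hence vanishes. Uniqueness holds because the
difference of two gradients is tangent and `a`-orthogonal to itself.
-/

open scoped Matrix

theorem Matrix.sum_sum_mul_eq_zero_of_isSymm_of_transpose_eq_neg {n : Type*} [Fintype n]
    {S A : Matrix n n ℝ} (hS : S.IsSymm) (hA : Aᵀ = -A) :
    ∑ j, ∑ k, S k j * A k j = 0 := by
  have h : ∑ j, ∑ k, S k j * A k j = -∑ j, ∑ k, S k j * A k j := by
    calc ∑ j, ∑ k, S k j * A k j = ∑ j, ∑ k, S j k * A j k := Finset.sum_comm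
      _ = ∑ j, ∑ k, S k j * -A k j := by
        refine Finset.sum_congr rfl fun j _ => Finset.sum_congr rfl fun k _ => ?_
        rw [hS.apply, ← Matrix.transpose_apply A, hA, Matrix.neg_apply]
      _ = -∑ j, ∑ k, S k j * A k j := by simp only [mul_neg, Finset.sum_neg_distrib]
  linarith

section Tuples

variable {N : ℕ} {V H₀ : Type*} [NormedAddCommGroup V] [NormedSpace ℝ V]
  [NormedAddCommGroup H₀] [InnerProductSpace ℝ H₀] (ι : V →L[ℝ] H₀)

theorem outerProdI_transpose (v w : Fin N → V) :
    (outerProdI ι v w)ᵀ = outerProdI ι w v := by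
  ext i j
  exact real_inner_comm _ _

theorem outerProdI_sub_left (u v w : Fin N → V) :
    outerProdI ι (u - v) w = outerProdI ι u w - outerProdI ι v w := by
  ext i j
  simp [outerProdI, inner_sub_left]

theorem outerProdI_sub_right (u v w : Fin N → V) :
    outerProdI ι u (v - w) = outerProdI ι u v - outerProdI ι u w := by
  ext i j
  simp [outerProdI, inner_sub_right]

theorem outerProdI_smulMat_left (v w : Fin N → V) (S : Matrix (Fin N) (Fin N) ℝ) :
    outerProdI ι (smulMat v S) w = Sᵀ * outerProdI ι v w := by
  ext i j
  simp [outerProdI, smulMat, Matrix.mul_apply, sum_inner, real_inner_smul_left]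

theorem outerProdI_smulMat_right (v w : Fin N → V) (S : Matrix (Fin N) (Fin N) ℝ) :
    outerProdI ι v (smulMat w S) = outerProdI ι v w * S := by
  ext i j
  simp [outerProdI, smulMat, Matrix.mul_apply, inner_sum, real_inner_smul_right, mul_comm]

theorem vecMul_outerProdI_apply (x : Fin N → ℝ) (v w : Fin N → V) (j : Fin N) :
    (x ᵥ* outerProdI ι v w) j = ⟪∑ i, x i • ι (v i), ι (w j)⟫ := by
  simp [Matrix.vecMul, dotProduct, outerProdI, sum_inner, real_inner_smul_left]

/-- Membership in the tangent space `T_φ` of the Stiefel manifold at `φ`. -/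
def IsTangentAt (φ η : Fin N → V) : Prop :=
  outerProdI ι η φ + outerProdI ι φ η = 0

variable {ι}

theorem IsTangentAt.sub {φ v w : Fin N → V} (hv : IsTangentAt ι φ v) (hw : IsTangentAt ι φ w) :
    IsTangentAt ι φ (v - w) := by
  unfold IsTangentAt at *
  rw [outerProdI_sub_left, outerProdI_sub_right, sub_add_sub_comm, hv, hw, sub_zero]

theorem IsTangentAt.transpose_outerProdI {φ η : Fin N → V} (hη : IsTangentAt ι φ η) :
    (outerProdI ι φ η)ᵀ = -outerProdI ι φ η := by
  rw [outerProdI_transpose, eq_neg_iff_add_eq_zero]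
  exact hη

theorem isTangentAt_sub_smulMat_inv {φ t : Fin N → V} (hφ : outerProdI ι φ φ = 1)
    (ht : IsUnit (outerProdI ι φ t).det) :
    IsTangentAt ι φ (φ - smulMat t (outerProdI ι φ t)⁻¹) := by
  unfold IsTangentAt
  rw [outerProdI_sub_left, outerProdI_sub_right, outerProdI_smulMat_left,
    outerProdI_smulMat_right, ← outerProdI_transpose ι φ t, ← Matrix.transpose_mul,
    Matrix.mul_nonsing_inv _ ht, hφ, Matrix.transpose_one]
  abel

end Tuples

section Form

variable {N : ℕ} {V H₀ : Type*} [NormedAddCommGroup V] [NormedSpace ℝ V]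
  [NormedAddCommGroup H₀] [InnerProductSpace ℝ H₀] {ι : V →L[ℝ] H₀}
  {a : V →ₗ[ℝ] V →ₗ[ℝ] ℝ} {T : H₀ → V} {φ : Fin N → V}

theorem pos_of_coercive (h : ∃ α > 0, ∀ u : V, α * ‖u‖ ^ 2 ≤ a u u) {u : V} (hu : u ≠ 0) :
    0 < a u u := by
  obtain ⟨α, hα, h⟩ := h
  exact (mul_pos hα (pow_pos (norm_pos_iff.mpr hu) 2)).trans_le (h u)

theorem Mmat_eq_outerProdI : Mmat ι T φ = outerProdI ι φ (Tphi ι T φ) := rfl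

theorem sum_apply_Tphi_smulMat (hT : ∀ (f : H₀) (w : V), a (T f) w = ⟪f, ι w⟫)
    (S : Matrix (Fin N) (Fin N) ℝ) (η : Fin N → V) :
    ∑ j, a (smulMat (Tphi ι T φ) S j) (η j) = ∑ j, ∑ k, S k j * outerProdI ι φ η k j := by
  simp [smulMat, Tphi, hT, outerProdI]

theorem Mmat_isSymm (hsymm : ∀ u w : V, a u w = a w u)
    (hT : ∀ (f : H₀) (w : V), a (T f) w = ⟪f, ι w⟫) : (Mmat ι T φ).IsSymm := by
  have hgram : ∀ i j, Mmat ι T φ i j = a (Tphi ι T φ i) (Tphi ι T φ j) := fun i j =>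
    (hT _ _).symm
  ext i j
  rw [Matrix.transpose_apply, hgram, hgram, hsymm]

theorem isUnit_det_Mmat (hpos : ∀ u : V, u ≠ 0 → 0 < a u u)
    (hT : ∀ (f : H₀) (w : V), a (T f) w = ⟪f, ι w⟫) (hφ : outerProdI ι φ φ = 1) :
    IsUnit (Mmat ι T φ).det := by
  rw [isUnit_iff_ne_zero, Ne, ← Matrix.exists_vecMul_eq_zero_iff]
  rintro ⟨x, hx, hxM⟩
  set F : H₀ := ∑ i, x i • ι (φ i)
  set u : V := ∑ i, x i • Tphi ι T φ i
  have hu : ∀ w, a u w = ⟪F, ι w⟫ := by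
    intro w
    simp [u, F, Tphi, hT, sum_inner, real_inner_smul_left]
  have huu : a u u = 0 := by
    calc a u u = ∑ i, x i * (x ᵥ* Mmat ι T φ) i := by
          rw [hu]
          simp only [u, F, map_sum, map_smul, inner_sum, real_inner_smul_right,
            Mmat_eq_outerProdI, vecMul_outerProdI_apply]
      _ = 0 := by simp [hxM]
  have hu0 : u = 0 := by
    by_contra h
    exact (hpos u h).ne' huu
  apply hx
  funext j
  rw [← Matrix.vecMul_one x, ← hφ, vecMul_outerProdI_apply, ← hu, hu0]
  simp

theorem sum_apply_sub_smulMat_Mmat_inv (hsymm : ∀ u w : V, a u w = a w u)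
    (hT : ∀ (f : H₀) (w : V), a (T f) w = ⟪f, ι w⟫) {η : Fin N → V}
    (hη : IsTangentAt ι φ η) :
    ∑ j, a ((φ - smulMat (Tphi ι T φ) (Mmat ι T φ)⁻¹) j) (η j) = ∑ j, a (φ j) (η j) := by
  have hinv : (Mmat ι T φ)⁻¹.IsSymm := (Mmat_isSymm hsymm hT).inv
  simp only [Pi.sub_apply, map_sub, LinearMap.sub_apply, Finset.sum_sub_distrib,
    sum_apply_Tphi_smulMat hT,
    Matrix.sum_sum_mul_eq_zero_of_isSymm_of_transpose_eq_neg hinv hη.transpose_outerProdI,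
    sub_zero]

theorem eq_of_isTangentAt_of_forall_sum_apply_eq (hpos : ∀ u : V, u ≠ 0 → 0 < a u u)
    {g g' : Fin N → V} (hg : IsTangentAt ι φ g) (hg' : IsTangentAt ι φ g')
    (h : ∀ η, IsTangentAt ι φ η → ∑ j, a (g j) (η j) = ∑ j, a (g' j) (η j)) : g = g' := by
  have hsum : ∑ j, a ((g - g') j) ((g - g') j) = 0 := by
    have hdiff := h _ (hg.sub hg')
    rw [← sub_eq_zero, ← Finset.sum_sub_distrib] at hdiff
    rw [← hdiff]
    refine Finset.sum_congr rfl fun j _ => ?_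
    rw [Pi.sub_apply, map_sub a, LinearMap.sub_apply]
  have hnonneg : ∀ u : V, 0 ≤ a u u := fun u => by
    rcases eq_or_ne u 0 with rfl | hu
    · simp
    · exact (hpos u hu).le
  rw [← sub_eq_zero]
  funext j
  by_contra hj
  exact (hpos _ hj).ne' ((Finset.sum_eq_zero_iff_of_nonneg fun j _ => hnonneg _).mp hsum j
    (Finset.mem_univ j))

end Form

theorem riemannian_gradient_formula_general {N : ℕ}
    {V H₀ : Type*}
    [NormedAddCommGroup V] [InnerProductSpace ℝ V]
    [NormedAddCommGroup H₀] [InnerProductSpace ℝ H₀]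
    (ι : V →L[ℝ] H₀)
    (aForm : V →ₗ[ℝ] V →ₗ[ℝ] ℝ)
    (hsymm : ∀ u w : V, aForm u w = aForm w u)
    (hcoer : ∃ α > 0, ∀ u : V, α * ‖u‖ ^ 2 ≤ aForm u u)
    (T : H₀ → V) (hT : ∀ (f : H₀) (w : V), aForm (T f) w = ⟪f, ι w⟫)
    (φ : Fin N → V) (hφ : outerProdI ι φ φ = 1) :
    IsUnit (Mmat ι T φ).det ∧
    (outerProdI ι (φ - smulMat (Tphi (↑ι) T φ) (Mmat ι T φ)⁻¹) φ +
      outerProdI ι φ (φ - smulMat (Tphi (↑ι) T φ) (Mmat ι T φ)⁻¹) = 0) ∧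
    (∀ η : Fin N → V, outerProdI ι η φ + outerProdI ι φ η = 0 →
      (∑ j, aForm ((φ - smulMat (Tphi (↑ι) T φ) (Mmat ι T φ)⁻¹) j) (η j)) =
        ∑ j, aForm (φ j) (η j)) ∧
    (∀ g : Fin N → V,
      (outerProdI ι g φ + outerProdI ι φ g = 0) →
      (∀ η : Fin N → V, outerProdI ι η φ + outerProdI ι φ η = 0 →
        (∑ j, aForm (g j) (η j)) = ∑ j, aForm (φ j) (η j)) →
      g = φ - smulMat (Tphi (↑ι) T φ) (Mmat ι T φ)⁻¹) := by
  have hpos : ∀ u : V, u ≠ 0 → 0 < aForm u u := fun u => pos_of_coercive hcoer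
  have hdet := isUnit_det_Mmat hpos hT hφ
  have htan : IsTangentAt ι φ (φ - smulMat (Tphi ι T φ) (Mmat ι T φ)⁻¹) := by
    rw [Mmat_eq_outerProdI] at hdet ⊢
    exact isTangentAt_sub_smulMat_inv hφ hdet
  have hgrad (η : Fin N → V) (hη : IsTangentAt ι φ η) :=
    sum_apply_sub_smulMat_Mmat_inv hsymm hT hη
  refine ⟨hdet, htan, hgrad, fun g hg hgradg => ?_⟩
  exact eq_of_isTangentAt_of_forall_sum_apply_eq hpos hg htan fun η hη =>
    (hgradg η hη).trans (hgrad η hη).symm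

/-- `M = ⟦φ, Tφ⟧` is invertible and `g = φ − (Tφ)·M⁻¹` is the unique
element of the tangent space `T_φ` with `a(g, η) = a(φ, η)` for all tangent `η`, i.e.
the Riemannian gradient at `φ` (w.r.t. the metric induced by `a`) of any energy whose
directional derivative at `φ` is `v ↦ a(φ, v)`. -/
theorem riemannian_gradient_formula {N : ℕ} (hN : 1 ≤ N)
    {V H₀ : Type*}
    [NormedAddCommGroup V] [InnerProductSpace ℝ V] [CompleteSpace V]
    [NormedAddCommGroup H₀] [InnerProductSpace ℝ H₀] [CompleteSpace H₀]
    (ι : V →L[ℝ] H₀) (hι : Function.Injective ι) (hdense : DenseRange ι)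
    (aForm : V →ₗ[ℝ] V →ₗ[ℝ] ℝ)
    (hsymm : ∀ u w : V, aForm u w = aForm w u)
    (hcoer : ∃ α > 0, ∀ u : V, α * ‖u‖ ^ 2 ≤ aForm u u)
    (hbdd : ∃ β > 0, ∀ u w : V, |aForm u w| ≤ β * ‖u‖ * ‖w‖)
    (T : H₀ → V) (hT : ∀ (f : H₀) (w : V), aForm (T f) w = ⟪f, ι w⟫)
    (φ : Fin N → V) (hφ : outerProdI ι φ φ = 1) :
    IsUnit (Mmat ι T φ).det ∧
    (outerProdI ι (φ - smulMat (Tphi (↑ι) T φ) (Mmat ι T φ)⁻¹) φ +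
      outerProdI ι φ (φ - smulMat (Tphi (↑ι) T φ) (Mmat ι T φ)⁻¹) = 0) ∧
    (∀ η : Fin N → V, outerProdI ι η φ + outerProdI ι φ η = 0 →
      (∑ j, aForm ((φ - smulMat (Tphi (↑ι) T φ) (Mmat ι T φ)⁻¹) j) (η j)) =
        ∑ j, aForm (φ j) (η j)) ∧
    (∀ g : Fin N → V,
      (outerProdI ι g φ + outerProdI ι φ g = 0) →
      (∀ η : Fin N → V, outerProdI ι η φ + outerProdI ι φ η = 0 →
        (∑ j, aForm (g j) (η j)) = ∑ j, aForm (φ j) (η j)) →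
      g = φ - smulMat (Tphi (↑ι) T φ) (Mmat ι T φ)⁻¹) :=
  riemannian_gradient_formula_general ι aForm hsymm hcoer T hT φ hφ
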